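/- Let V be a real inner product space and let J : V → V be a linear map with J ∘ J = −id and ⟨Jx, Jy⟩ = ⟨x, y⟩ for all x, y ∈ V; define ω(x,y) := ⟨Jx, y⟩. Let ρ : ℝ² → ℝ² be the rotation with ρ(e₁) = e₂ and ρ(e₂) = −e₁. For a real-linear map A : ℝ² → V define ∂̄A := (1/2)(A + J ∘ A ∘ ρ). Then (1/2)(‖Ae₁‖² + ‖Ae₂‖²) = ‖(∂̄A)e₁‖² + ‖(∂̄A)e₂‖² + ω(Ae₁, Ae₂). -/

import Mathlib

noncomputable section

/-- The rotation `ρ : ℝ² → ℝ²` with `ρ(e₁) = e₂` and `ρ(e₂) = −e₁`. -/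
def rot : (ℝ × ℝ) →ₗ[ℝ] (ℝ × ℝ) where
  toFun p := (-p.2, p.1)
  map_add' p q := by ext <;> simp <;> ring
  map_smul' c p := by ext <;> simp [mul_comm]

/-- The Cauchy–Riemann operator `∂̄A := (1/2)(A + J ∘ A ∘ ρ)` of a real-linear map
`A : ℝ² → V` with respect to a complex structure `J` on `V`. -/
def dbar {V : Type*} [AddCommGroup V] [Module ℝ V]
    (J : V →ₗ[ℝ] V) (A : (ℝ × ℝ) →ₗ[ℝ] V) : (ℝ × ℝ) →ₗ[ℝ] V :=
  (1 / 2 : ℝ) • (A + J ∘ₗ A ∘ₗ rot)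

/-
With `u = Ae₁`, `v = Ae₂` one has `∂̄A e₁ = (u + Jv)/2` and `∂̄A e₂ = (v - Ju)/2`. Since `J` is an
isometry the squared norms of these add up to `(‖u‖² + ‖v‖²)/2` plus the cross term
`(⟨u, Jv⟩ - ⟨v, Ju⟩)/2`, and skew-adjointness of `J` (from `J² = -1` and orthogonality)
turns the cross term into `-⟨Ju, v⟩ = -ω(u, v)`.
-/

section DBar

variable {V : Type*} [AddCommGroup V] [Module ℝ V] (J : V →ₗ[ℝ] V) (A : (ℝ × ℝ) →ₗ[ℝ] V)

theorem dbar_apply (p : ℝ × ℝ) : dbar J A p = (1 / 2 : ℝ) • (A p + J (A (rot p))) := rfl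

theorem dbar_apply_fst : dbar J A (1, 0) = (1 / 2 : ℝ) • (A (1, 0) + J (A (0, 1))) := by
  simp [dbar_apply, rot]

theorem dbar_apply_snd : dbar J A (0, 1) = (1 / 2 : ℝ) • (A (0, 1) - J (A (1, 0))) := by
  have : A (-1, 0) = -A (1, 0) := by rw [← map_neg, Prod.neg_mk, neg_zero]
  simp [dbar_apply, rot, this, sub_eq_add_neg]

end DBar

section OrthogonalComplexStructure

variable {V : Type*} [NormedAddCommGroup V] [InnerProductSpace ℝ V] {J : V →ₗ[ℝ] V}

theorem inner_apply_right_eq_neg_inner_apply_left (hJ2 : ∀ x, J (J x) = -x)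
    (hJinner : ∀ x y : V, inner ℝ (J x) (J y) = inner ℝ x y) (x y : V) :
    inner ℝ x (J y) = -inner ℝ (J x) y := by
  rw [← hJinner x (J y), hJ2, inner_neg_right]

theorem norm_sq_half_add_apply_add_norm_sq_half_sub_apply (hJ2 : ∀ x, J (J x) = -x)
    (hJinner : ∀ x y : V, inner ℝ (J x) (J y) = inner ℝ x y) (u v : V) :
    ‖(1 / 2 : ℝ) • (u + J v)‖ ^ 2 + ‖(1 / 2 : ℝ) • (v - J u)‖ ^ 2
      = (1 / 2 : ℝ) * (‖u‖ ^ 2 + ‖v‖ ^ 2) - inner ℝ (J u) v := by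
  have hnorm (x : V) : ‖J x‖ = ‖x‖ := (J.isometryOfInner hJinner).norm_map x
  have hskew := inner_apply_right_eq_neg_inner_apply_left hJ2 hJinner u v
  rw [norm_smul, norm_smul, mul_pow, mul_pow, norm_add_sq_real, norm_sub_sq_real, hnorm, hnorm,
    real_inner_comm (J u) v, hskew]
  norm_num
  ring

end OrthogonalComplexStructure

/-- **Pointwise energy identity for compatible almost complex structures** (Lemma 6.1
of Solomon–Verbitsky, following Lemma 2.2.1 of McDuff–Salamon). If `J` is an
orthogonal complex structure on a real inner product space `V`, `ω(x,y) = ⟨Jx, y⟩`,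
and `A : ℝ² → V` is real-linear, then
`(1/2)(‖Ae₁‖² + ‖Ae₂‖²) = ‖(∂̄A)e₁‖² + ‖(∂̄A)e₂‖² + ω(Ae₁, Ae₂)`. -/
theorem energy_identity
    {V : Type*} [NormedAddCommGroup V] [InnerProductSpace ℝ V]
    (J : V →ₗ[ℝ] V)
    (hJ2 : ∀ x, J (J x) = -x)
    (hJinner : ∀ x y : V, (inner ℝ (J x) (J y) : ℝ) = inner ℝ x y)
    (A : (ℝ × ℝ) →ₗ[ℝ] V) :
    (1 / 2 : ℝ) * (‖A (1, 0)‖ ^ 2 + ‖A (0, 1)‖ ^ 2)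
      = ‖dbar J A (1, 0)‖ ^ 2 + ‖dbar J A (0, 1)‖ ^ 2
        + (inner ℝ (J (A (1, 0))) (A (0, 1)) : ℝ) := by
  rw [dbar_apply_fst, dbar_apply_snd,
    norm_sq_half_add_apply_add_norm_sq_half_sub_apply hJ2 hJinner, sub_add_cancel]

end
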